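/- Let q > 0 and φ ∈ L¹(ℝ). Then for every ξ ≥ 0: 𝓕[𝓛₊φ](ξ) = 𝓕[φ](ξ) + r_q(ξ)·𝓕[1₊φ](−ξ) + r_q(ξ)·𝓕[1₋φ](ξ), and for every ξ < 0: 𝓕[𝓛₋φ](ξ) = 𝓕[φ](ξ) + conj(r_q(ξ))·𝓕[1₋φ](−ξ) + conj(r_q(ξ))·𝓕[1₊φ](ξ). In other words, the two representations of the distorted Fourier transform 𝓕_q coincide. -/

import Mathlib

open Complex MeasureTheory Real

/-- Reflection coefficient `r_q(ξ) = q/(iξ − q)`. -/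
noncomputable def reflCoeff (q ξ : ℝ) : ℂ := (q : ℂ) / (I * ξ - q)

/-- The Fourier transform `𝓕[φ](ξ) = (2π)^{−1/2} ∫ e^{−iyξ} φ(y) dy`. -/
noncomputable def FT (φ : ℝ → ℂ) (ξ : ℝ) : ℂ :=
  ((Real.sqrt (2 * π) : ℂ))⁻¹ * ∫ y : ℝ, Complex.exp (-(I * y * ξ)) * φ y

/-- Indicator of `[0,∞)` times `φ`. -/
noncomputable def posPart (φ : ℝ → ℂ) (x : ℝ) : ℂ := if 0 ≤ x then φ x else 0

/-- Indicator of `(−∞,0)` times `φ`. -/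
noncomputable def negPart (φ : ℝ → ℂ) (x : ℝ) : ℂ := if x < 0 then φ x else 0

/-- The operator `𝓛₊[φ](x) = φ(x) − q·1₋(x) e^{qx} ∫_x^{−x} e^{q|y|} φ(y) dy`. -/
noncomputable def Lplus (q : ℝ) (φ : ℝ → ℂ) (x : ℝ) : ℂ :=
  φ x - (if x < 0 then (1 : ℂ) else 0) * q * Real.exp (q * x) *
    ∫ y in x..(-x), (Real.exp (q * |y|) : ℂ) * φ y

/-- The operator `𝓛₋[φ](x) = φ(x) − q·1₊(x) e^{−qx} ∫_{−x}^{x} e^{q|y|} φ(y) dy`. -/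
noncomputable def Lminus (q : ℝ) (φ : ℝ → ℂ) (x : ℝ) : ℂ :=
  φ x - (if 0 ≤ x then (1 : ℂ) else 0) * q * Real.exp (-(q * x)) *
    ∫ y in (-x)..x, (Real.exp (q * |y|) : ℂ) * φ y

/-!
For `x < 0` the correction term of `𝓛₊φ` is `q e^{qx} ∫_{|y|<−x} e^{q|y|} φ(y) dy`, so after
Fubini the `x`-integral runs over `x < −|y|` and equals `e^{−(q−iξ)|y|}/(q−iξ)`. This turns the
correction into `r_q(ξ) (2π)^{−1/2} ∫ e^{iξ|y|} φ(y) dy`, which splits over `y ≥ 0` and `y < 0`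
into the two Fourier transforms. The identity for `𝓛₋` is the reflection `x ↦ −x` of the one
for `𝓛₊`, and the reflection conjugates `r_q`.
-/

open Set

lemma posPart_eq_indicator (φ : ℝ → ℂ) : posPart φ = (Ici 0).indicator φ := by
  ext x; simp [_root_.posPart, indicator]

lemma negPart_eq_indicator (φ : ℝ → ℂ) : negPart φ = (Iio 0).indicator φ := by
  ext x; simp [_root_.negPart, indicator]

lemma integrable_FT_integrand {f : ℝ → ℂ} (hf : Integrable f) (ξ : ℝ) :
    Integrable (fun y : ℝ => cexp (-(I * y * ξ)) * f y) := by
  refine hf.bdd_mul (c := 1) (by fun_prop) (ae_of_all _ fun y => ?_)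
  rw [norm_exp]
  simp

lemma FT_comp_neg (f : ℝ → ℂ) (ξ : ℝ) : FT (fun x => f (-x)) ξ = FT f (-ξ) := by
  rw [FT, FT, ← integral_neg_eq_self]
  simp

lemma reflCoeff_neg (q ξ : ℝ) : reflCoeff q (-ξ) = starRingEnd ℂ (reflCoeff q ξ) := by
  simp [reflCoeff, map_div₀, sub_eq_add_neg]

noncomputable def foldedFT (φ : ℝ → ℂ) (ξ : ℝ) : ℂ :=
  ((Real.sqrt (2 * π) : ℂ))⁻¹ * ∫ y : ℝ, cexp (I * ξ * |y|) * φ y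

lemma foldedFT_comp_neg (φ : ℝ → ℂ) (ξ : ℝ) : foldedFT (fun y => φ (-y)) ξ = foldedFT φ ξ := by
  rw [foldedFT, foldedFT, ← integral_neg_eq_self]
  simp

lemma foldedFT_eq_FT_posPart_add_FT_negPart {φ : ℝ → ℂ} (hφ : Integrable φ) (ξ : ℝ) :
    foldedFT φ ξ = FT (posPart φ) (-ξ) + FT (negPart φ) ξ := by
  have hsplit : ∀ y : ℝ, cexp (I * ξ * |y|) * φ y
      = cexp (-(I * y * (-ξ : ℝ))) * posPart φ y + cexp (-(I * y * ξ)) * negPart φ y := by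
    intro y
    rcases le_or_gt 0 y with hy | hy
    · simp only [_root_.posPart, _root_.negPart, if_pos hy, if_neg (not_lt.2 hy), mul_zero,
        add_zero, abs_of_nonneg hy]
      push_cast; ring_nf
    · simp only [_root_.posPart, _root_.negPart, if_pos hy, if_neg (not_le.2 hy), mul_zero,
        zero_add, abs_of_neg hy]
      push_cast; ring_nf
  rw [foldedFT, FT, FT, ← mul_add, ← integral_add, integral_congr_ae (ae_of_all _ hsplit)]
  · exact integrable_FT_integrand (posPart_eq_indicator φ ▸ hφ.indicator measurableSet_Ici) _
  · exact integrable_FT_integrand (negPart_eq_indicator φ ▸ hφ.indicator measurableSet_Iio) _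

/-- The integrand of `∫_{x<0} e^{−ixξ} e^{qx} ∫_x^{−x} e^{q|y|} φ(y) dy dx`, the correction term
of `𝓕[𝓛₊φ](ξ)` divided by `−q`; up to the null set `y = ±x` its support is `x + |y| < 0`. -/
noncomputable def LplusKernel (q ξ : ℝ) (φ : ℝ → ℂ) (p : ℝ × ℝ) : ℂ :=
  {p : ℝ × ℝ | p.1 + |p.2| < 0}.indicator
    (fun p => cexp ((q - I * ξ) * p.1) * (Real.exp (q * |p.2|) * φ p.2)) p

section LplusKernel

variable {q : ℝ} (ξ : ℝ) {φ : ℝ → ℂ}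

lemma LplusKernel_apply (x y : ℝ) :
    LplusKernel q ξ φ (x, y)
      = (Iio (-|y|)).indicator (fun x => cexp ((q - I * ξ) * x)) x
        * (Real.exp (q * |y|) * φ y) := by
  by_cases h : x + |y| < 0
  · simp [LplusKernel, h, lt_neg_iff_add_neg.2 h]
  · simp [LplusKernel, h, mt lt_neg_iff_add_neg.1 h]

lemma integral_LplusKernel_dx (hq : 0 < q) (y : ℝ) :
    ∫ x, LplusKernel q ξ φ (x, y) = cexp (I * ξ * |y|) * φ y / (q - I * ξ) := by
  have hre : 0 < ((q : ℂ) - I * ξ).re := by simpa using hq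
  simp only [LplusKernel_apply]
  rw [integral_mul_const, integral_indicator measurableSet_Iio,
    setIntegral_congr_set Iio_ae_eq_Iic, integral_exp_mul_complex_Iic hre, div_mul_eq_mul_div,
    ← mul_assoc, ofReal_exp, ← Complex.exp_add]
  push_cast
  ring_nf

lemma integral_norm_LplusKernel_dx (hq : 0 < q) (y : ℝ) :
    ∫ x, ‖LplusKernel q ξ φ (x, y)‖ = ‖φ y‖ / q := by
  have hnorm : ∀ x, ‖LplusKernel q ξ φ (x, y)‖
      = (Iio (-|y|)).indicator (fun x => Real.exp (q * x)) x * (Real.exp (q * |y|) * ‖φ y‖) := by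
    intro x
    rw [LplusKernel_apply, norm_mul, norm_indicator_eq_indicator_norm, norm_mul, norm_real,
      Real.norm_of_nonneg (Real.exp_pos _).le]
    congr 2
    ext x
    simp [norm_exp]
  simp only [hnorm]
  rw [integral_mul_const, integral_indicator measurableSet_Iio,
    setIntegral_congr_set Iio_ae_eq_Iic, integral_exp_mul_Iic hq, div_mul_eq_mul_div,
    ← mul_assoc, ← Real.exp_add]
  simp

lemma integrable_LplusKernel (hq : 0 < q) (hφ : Integrable φ) :
    Integrable (LplusKernel q ξ φ) (volume.prod volume) := by
  have hmeas : AEStronglyMeasurable (LplusKernel q ξ φ) (volume.prod volume) := by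
    refine AEStronglyMeasurable.indicator ?_ (measurableSet_lt (by fun_prop) measurable_const)
    have h1 : Continuous fun p : ℝ × ℝ => cexp ((q - I * ξ) * p.1) := by fun_prop
    have h2 : Continuous fun p : ℝ × ℝ => (Real.exp (q * |p.2|) : ℂ) := by fun_prop
    exact h1.aestronglyMeasurable.mul (h2.aestronglyMeasurable.mul hφ.1.comp_snd)
  refine (integrable_prod_iff' hmeas).2 ⟨ae_of_all _ fun y => ?_, ?_⟩
  · simp only [LplusKernel_apply]
    have hexp := integrableOn_exp_mul_complex_Iic (a := q - I * ξ) (by simpa using hq) (-|y|)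
    exact ((integrable_indicator_iff measurableSet_Iio).2
      (hexp.mono_set Iio_subset_Iic_self)).mul_const _
  · simp only [integral_norm_LplusKernel_dx ξ hq]
    exact hφ.norm.div_const q

lemma integral_LplusKernel_dy (x : ℝ) :
    ∫ y, LplusKernel q ξ φ (x, y)
      = cexp (-(I * x * ξ)) * ((if x < 0 then (1 : ℂ) else 0) * Real.exp (q * x) *
          ∫ y in x..(-x), (Real.exp (q * |y|) : ℂ) * φ y) := by
  rcases lt_or_ge x 0 with hx | hx
  · have hsec : ∀ y, LplusKernel q ξ φ (x, y)
        = cexp ((q - I * ξ) * x)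
          * (Ioo x (-x)).indicator (fun y => (Real.exp (q * |y|) : ℂ) * φ y) y := by
      intro y
      have hmem : x + |y| < 0 ↔ y ∈ Ioo x (-x) := by
        rw [mem_Ioo, add_comm, ← lt_neg_iff_add_neg, abs_lt, neg_neg]
      by_cases h : x + |y| < 0
      · simp [LplusKernel, h, hmem.1 h]
      · simp [LplusKernel, h, mt hmem.2 h]
    simp only [hsec]
    rw [integral_const_mul, integral_indicator measurableSet_Ioo, if_pos hx, one_mul,
      intervalIntegral.integral_of_le (by linarith), integral_Ioc_eq_integral_Ioo, ← mul_assoc,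
      ofReal_exp, ← Complex.exp_add]
    congr 2
    push_cast
    ring
  · have hsec : ∀ y, LplusKernel q ξ φ (x, y) = 0 := fun y => by
      simp [LplusKernel, (add_nonneg hx (abs_nonneg y)).not_gt]
    simp [hsec, not_lt.2 hx]

end LplusKernel

lemma FT_Lplus {q : ℝ} (hq : 0 < q) {φ : ℝ → ℂ} (hφ : Integrable φ) (ξ : ℝ) :
    FT (Lplus q φ) ξ = FT φ ξ + reflCoeff q ξ * foldedFT φ ξ := by
  have hK := integrable_LplusKernel ξ hq hφ
  have hpoint : ∀ x : ℝ, cexp (-(I * x * ξ)) * Lplus q φ x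
      = cexp (-(I * x * ξ)) * φ x - q * ∫ y, LplusKernel q ξ φ (x, y) := by
    intro x
    rw [integral_LplusKernel_dy, Lplus]
    ring
  have ha : (q : ℂ) - I * ξ ≠ 0 := fun h => by simpa [hq.ne'] using congrArg Complex.re h
  rw [FT, FT, foldedFT, integral_congr_ae (ae_of_all _ hpoint),
    integral_sub (integrable_FT_integrand hφ ξ) (hK.integral_prod_left.const_mul _),
    integral_const_mul, integral_integral_swap (f := fun x y => LplusKernel q ξ φ (x, y)) hK]
  simp only [integral_LplusKernel_dx ξ hq]
  rw [integral_div, reflCoeff, show I * (ξ : ℂ) - q = -(q - I * ξ) by ring, div_neg]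
  generalize ∫ y : ℝ, cexp (-(I * y * ξ)) * φ y = A
  generalize ∫ y : ℝ, cexp (I * ξ * |y|) * φ y = B
  field_simp
  ring

lemma Lminus_eq_Lplus_comp_neg (q : ℝ) (φ : ℝ → ℂ) (x : ℝ) :
    Lminus q φ x = Lplus q (fun y => φ (-y)) (-x) := by
  have hsymm : ∫ y in (-x)..x, (Real.exp (q * |y|) : ℂ) * φ (-y)
      = ∫ y in (-x)..x, (Real.exp (q * |y|) : ℂ) * φ y := by
    simpa using intervalIntegral.integral_comp_neg (a := -x) (b := x)
      (fun y : ℝ => (Real.exp (q * |y|) : ℂ) * φ y)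
  rcases lt_trichotomy x 0 with hx | rfl | hx
  · simp only [Lminus, Lplus, neg_neg, if_neg (not_le.2 hx), if_neg (not_lt.2 (neg_nonneg.2 hx.le))]
    ring
  · simp [Lminus, Lplus]
  · simp only [Lminus, Lplus, neg_neg, mul_neg, hsymm, if_pos hx.le, if_pos (neg_neg_of_pos hx)]

lemma FT_Lminus {q : ℝ} (hq : 0 < q) {φ : ℝ → ℂ} (hφ : Integrable φ) (ξ : ℝ) :
    FT (Lminus q φ) ξ = FT φ ξ + starRingEnd ℂ (reflCoeff q ξ) * foldedFT φ (-ξ) := by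
  rw [show Lminus q φ = fun x => Lplus q (fun y => φ (-y)) (-x) from
      funext (Lminus_eq_Lplus_comp_neg q φ),
    FT_comp_neg, FT_Lplus hq hφ.comp_neg, FT_comp_neg, neg_neg, foldedFT_comp_neg, reflCoeff_neg]

theorem distortedFT_two_representations (q : ℝ) (hq : 0 < q)
    (φ : ℝ → ℂ) (hφ : Integrable φ) :
    (∀ ξ : ℝ, 0 ≤ ξ →
      FT (Lplus q φ) ξ
        = FT φ ξ + reflCoeff q ξ * FT (posPart φ) (-ξ)
          + reflCoeff q ξ * FT (negPart φ) ξ) ∧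
    (∀ ξ : ℝ, ξ < 0 →
      FT (Lminus q φ) ξ
        = FT φ ξ + (starRingEnd ℂ) (reflCoeff q ξ) * FT (negPart φ) (-ξ)
          + (starRingEnd ℂ) (reflCoeff q ξ) * FT (posPart φ) ξ) := by
  refine ⟨fun ξ _ => ?_, fun ξ _ => ?_⟩
  · rw [FT_Lplus hq hφ, foldedFT_eq_FT_posPart_add_FT_negPart hφ]
    ring
  · rw [FT_Lminus hq hφ, foldedFT_eq_FT_posPart_add_FT_negPart hφ, neg_neg]
    ring
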